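/- Let k ≥ 2 and 1 ≤ m ≤ k−1, and let (k_1,…,k_m) be positive integers with k_1+⋯+k_m = k. Let c > 1/2 and δ > 0 be fixed. Let D = (d_{ij}) be any m×k matrix with entries in {0,1,−1} such that every column has exactly one nonzero entry and row i has exactly k_i nonzero entries for each 1 ≤ i ≤ m. Then for all n ≥ 1: V_n^{−2kc} ∫_{ℝ^n}⋯∫_{ℝ^n} ∏_{j=1}^k f_{c,δ}( Σ_{i=1}^m d_{ij}·x_i ) dx_1⋯dx_m = δ^{m−2kc} · ∏_{i=1}^m 1/(2 k_i c − 1). -/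

import Mathlib

/-!
Every column of `D` has a single nonzero entry `±1`, and `f_{c,δ}` is even, so the `j`-th factor
of the integrand is `f_{c,δ}(x_i)` for the row `i` holding that entry. Grouping the columns by rows
turns the integrand into `∏ᵢ f_{c,δ}(x_i)^{k_i} = ∏ᵢ f_{k_i c,δ}(x_i)`, so the integral factorises.
In polar coordinates `∫_{|x| > R} |x|^{-2an} dx = V_n R^{n(1-2a)} / (2a - 1)` for `a > 1/2`, and
`R_n(δ)^n = δ / V_n` makes each factor `V_n^{2a} δ^{1-2a} / (2a - 1)`.
-/

open MeasureTheory

/-- `V_n = π^{n/2} / Γ(n/2 + 1)`, the volume of the unit ball in `ℝⁿ`. -/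
noncomputable def unitBallVol (n : ℕ) : ℝ :=
  Real.pi ^ ((n : ℝ) / 2) / Real.Gamma ((n : ℝ) / 2 + 1)

/-- `R_n(δ) = (δ / V_n)^{1/n}`, the radius of a ball of volume `δ` in `ℝⁿ`. -/
noncomputable def cutRadius (n : ℕ) (δ : ℝ) : ℝ :=
  (δ / unitBallVol n) ^ (1 / (n : ℝ))

/-- `f_{c,δ}(x) = |x|^{-2cn}` if `|x| > R_n(δ)`, and `0` otherwise. -/
noncomputable def truncPower (n : ℕ) (c δ : ℝ) (x : EuclideanSpace ℝ (Fin n)) : ℝ :=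
  if cutRadius n δ < ‖x‖ then ‖x‖ ^ (-(2 * c * (n : ℝ))) else 0

open Set Metric
open scoped Finset

theorem integral_ite_lt_norm_rpow {E : Type*} [NormedAddCommGroup E] [NormedSpace ℝ E]
    [MeasurableSpace E] [BorelSpace E] [FiniteDimensional ℝ E] [Nontrivial E]
    (μ : Measure E) [μ.IsAddHaarMeasure] {R s : ℝ} (hR : 0 < R)
    (hs : (Module.finrank ℝ E : ℝ) < s) :
    ∫ x, (if R < ‖x‖ then ‖x‖ ^ (-s) else 0) ∂μ =
      Module.finrank ℝ E * μ.real (ball 0 1) * R ^ ((Module.finrank ℝ E : ℝ) - s) /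
        (s - Module.finrank ℝ E) := by
  have hd : 1 ≤ Module.finrank ℝ E := Module.finrank_pos
  have radial :
      ∫ r in Ioi (0 : ℝ), r ^ (Module.finrank ℝ E - 1) • (if R < r then r ^ (-s) else 0) =
        ∫ r in Ioi R, r ^ ((Module.finrank ℝ E : ℝ) - s - 1) := by
    rw [← integral_indicator measurableSet_Ioi, ← integral_indicator measurableSet_Ioi]
    congr 1 with r
    by_cases hr : R < r
    · have hr0 : 0 < r := hR.trans hr
      simp only [indicator, mem_Ioi, hr, hr0, if_true, smul_eq_mul, ← Real.rpow_natCast,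
        ← Real.rpow_add hr0, Nat.cast_sub hd]
      ring_nf
    · simp [indicator, hr]
  have hexp : (Module.finrank ℝ E : ℝ) - s - 1 < -1 := by linarith
  rw [integral_fun_norm_addHaar μ (fun r => if R < r then r ^ (-s) else 0), radial,
    integral_Ioi_rpow_of_lt hexp hR, sub_add_cancel, neg_div, ← div_neg,
    neg_sub, nsmul_eq_mul, smul_eq_mul]
  ring

theorem prod_apply_sum_smul_eq_prod_pow {ι κ E M : Type*} [Fintype ι] [Fintype κ]
    [AddCommGroup E] [Module ℝ E] [CommMonoid M] (f : E → M) (hf : ∀ y, f (-y) = f y)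
    (D : Matrix ι κ ℤ) (hent : ∀ i j, D i j = 0 ∨ D i j = 1 ∨ D i j = -1)
    (hcol : ∀ j, ∃! i, D i j ≠ 0) (x : ι → E) :
    ∏ j, f (∑ i, (D i j : ℝ) • x i) = ∏ i, f (x i) ^ #{j | D i j ≠ 0} := by
  classical
  choose σ hσ huniq using hcol
  have hcolumn : ∀ j, f (∑ i, (D i j : ℝ) • x i) = f (x (σ j)) := by
    intro j
    rw [Finset.sum_eq_single (σ j) (fun i _ hi => by simp [not_not.mp (mt (huniq j i) hi)])
      (by simp)]
    rcases hent (σ j) j with h | h | h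
    · exact absurd h (hσ j)
    · simp [h]
    · simp [h, hf]
  have hfiber : ∀ i j, σ j = i ↔ D i j ≠ 0 := fun i j =>
    ⟨fun h => h ▸ hσ j, fun h => (huniq j i h).symm⟩
  calc ∏ j, f (∑ i, (D i j : ℝ) • x i) = ∏ j, f (x (σ j)) :=
        Finset.prod_congr rfl fun j _ => hcolumn j
    _ = ∏ i, ∏ j with σ j = i, f (x i) := (Finset.prod_fiberwise' _ σ fun i => f (x i)).symm
    _ = ∏ i, f (x i) ^ #{j | D i j ≠ 0} := by simp only [Finset.prod_const, hfiber]

lemma unitBallVol_pos (n : ℕ) : 0 < unitBallVol n :=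
  div_pos (Real.rpow_pos_of_pos Real.pi_pos _) (Real.Gamma_pos_of_pos (by positivity))

lemma measureReal_ball_zero_one_eq_unitBallVol {n : ℕ} (hn : n ≠ 0) :
    volume.real (ball (0 : EuclideanSpace ℝ (Fin n)) 1) = unitBallVol n := by
  have : Nonempty (Fin n) := ⟨⟨0, Nat.pos_of_ne_zero hn⟩⟩
  have hsqrt : Real.sqrt Real.pi ^ n = Real.pi ^ ((n : ℝ) / 2) := by
    rw [Real.sqrt_eq_rpow, ← Real.rpow_natCast, ← Real.rpow_mul Real.pi_pos.le, one_div_mul_eq_div]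
  rw [Measure.real, EuclideanSpace.volume_ball, Fintype.card_fin, ENNReal.ofReal_one, one_pow,
    one_mul, hsqrt]
  exact ENNReal.toReal_ofReal (unitBallVol_pos n).le

lemma cutRadius_rpow_natCast_mul {n : ℕ} (hn : n ≠ 0) {δ : ℝ} (hδ : 0 ≤ δ) (t : ℝ) :
    cutRadius n δ ^ ((n : ℝ) * t) = (δ / unitBallVol n) ^ t := by
  rw [cutRadius, ← Real.rpow_mul (div_nonneg hδ (unitBallVol_pos n).le), one_div,
    inv_mul_cancel_left₀ (Nat.cast_ne_zero.mpr hn)]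

lemma truncPower_neg (n : ℕ) (c δ : ℝ) (x : EuclideanSpace ℝ (Fin n)) :
    truncPower n c δ (-x) = truncPower n c δ x := by
  simp only [truncPower, norm_neg]

lemma truncPower_pow (n : ℕ) (c δ : ℝ) {K : ℕ} (hK : K ≠ 0) (x : EuclideanSpace ℝ (Fin n)) :
    truncPower n c δ x ^ K = truncPower n (K * c) δ x := by
  unfold truncPower
  split_ifs
  · rw [← Real.rpow_natCast, ← Real.rpow_mul (norm_nonneg x)]
    ring_nf
  · exact zero_pow hK

theorem integral_truncPower {n : ℕ} (hn : n ≠ 0) {c δ : ℝ} (hc : 1 / 2 < c) (hδ : 0 < δ) :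
    ∫ x, truncPower n c δ x = unitBallVol n ^ (2 * c) * δ ^ (1 - 2 * c) / (2 * c - 1) := by
  have : Nontrivial (EuclideanSpace ℝ (Fin n)) :=
    Module.nontrivial_of_finrank_pos (R := ℝ) (by simpa using Nat.pos_of_ne_zero hn)
  have hV := unitBallVol_pos n
  have hR : 0 < cutRadius n δ := Real.rpow_pos_of_pos (div_pos hδ hV) _
  have hs : (Module.finrank ℝ (EuclideanSpace ℝ (Fin n)) : ℝ) < 2 * c * n := by
    rw [finrank_euclideanSpace_fin]
    nlinarith [(Nat.cast_pos.mpr (Nat.pos_of_ne_zero hn) : (0 : ℝ) < n)]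
  simp only [truncPower]
  rw [integral_ite_lt_norm_rpow volume hR hs, finrank_euclideanSpace_fin,
    measureReal_ball_zero_one_eq_unitBallVol hn,
    show (n : ℝ) - 2 * c * n = n * (1 - 2 * c) by ring, cutRadius_rpow_natCast_mul hn hδ.le,
    Real.div_rpow hδ.le hV.le, show 2 * c = 1 - (1 - 2 * c) by ring, Real.rpow_sub hV, Real.rpow_one]
  have hn' : (n : ℝ) ≠ 0 := Nat.cast_ne_zero.mpr hn
  have hc' : 2 * c - 1 ≠ 0 := by linarith
  field_simp

theorem product_form_admissible_integral_general
    (k m : ℕ)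
    (ki : Fin m → ℕ) (hpos : ∀ i, 0 < ki i) (hsum : ∑ i : Fin m, ki i = k)
    (c δ : ℝ) (hc : 1 / 2 < c) (hδ : 0 < δ)
    (D : Matrix (Fin m) (Fin k) ℤ)
    (hent : ∀ i j, D i j = 0 ∨ D i j = 1 ∨ D i j = -1)
    (hcol : ∀ j, ∃! i, D i j ≠ 0)
    (hrow : ∀ i : Fin m, (Finset.univ.filter fun j => D i j ≠ 0).card = ki i)
    (n : ℕ) (hn : 1 ≤ n) :
    unitBallVol n ^ (-(2 * (k : ℝ) * c)) *
      ∫ x : Fin m → EuclideanSpace ℝ (Fin n),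
        ∏ j : Fin k, truncPower n c δ (∑ i : Fin m, (D i j : ℝ) • x i)
    = δ ^ ((m : ℝ) - 2 * (k : ℝ) * c) * ∏ i : Fin m, 1 / (2 * (ki i : ℝ) * c - 1) := by
  have hV := unitBallVol_pos n
  have hintegrand : ∀ x : Fin m → EuclideanSpace ℝ (Fin n),
      ∏ j, truncPower n c δ (∑ i, (D i j : ℝ) • x i) = ∏ i, truncPower n (ki i * c) δ (x i) := by
    intro x
    rw [prod_apply_sum_smul_eq_prod_pow _ (truncPower_neg n c δ) D hent hcol x]
    exact Finset.prod_congr rfl fun i _ => by rw [hrow i, truncPower_pow n c δ (hpos i).ne']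
  have hfactor : ∀ i, 1 / 2 < (ki i : ℝ) * c := fun i => by
    have : (1 : ℝ) ≤ ki i := Nat.one_le_cast.mpr (hpos i)
    nlinarith
  have hk : ∑ i, (ki i : ℝ) = k := by exact_mod_cast hsum
  simp_rw [hintegrand]
  rw [integral_fintype_prod_volume_eq_prod (fun i => truncPower n (ki i * c) δ),
    Finset.prod_congr rfl fun i _ => integral_truncPower (by omega) (hfactor i) hδ,
    Finset.prod_div_distrib, Finset.prod_mul_distrib, ← Real.rpow_sum_of_pos hV,
    ← Real.rpow_sum_of_pos hδ, Finset.sum_sub_distrib, ← Finset.mul_sum, ← Finset.sum_mul, hk]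
  simp only [Finset.sum_const, Finset.card_univ, Fintype.card_fin, nsmul_eq_mul, mul_one,
    one_div, Finset.prod_inv_distrib]
  rw [div_eq_mul_inv, ← mul_assoc, ← mul_assoc, ← Real.rpow_add hV,
    show -(2 * (k : ℝ) * c) + 2 * (k * c) = 0 by ring, Real.rpow_zero, one_mul]
  simp only [mul_assoc]

/-- for a `{0,±1}`-matrix `D` with exactly one nonzero entry in each column
and exactly `k_i` nonzero entries in row `i`, for all `n ≥ 1`,
`V_n^{-2kc} ∫⋯∫ ∏_j f_{c,δ}(Σ_i d_{ij} x_i) dx_1⋯dx_m = δ^{m-2kc} ∏_i (2k_i c - 1)⁻¹`. -/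
theorem product_form_admissible_integral
    (k m : ℕ) (hk : 2 ≤ k) (hm1 : 1 ≤ m) (hmk : m ≤ k - 1)
    (ki : Fin m → ℕ) (hpos : ∀ i, 0 < ki i) (hsum : ∑ i : Fin m, ki i = k)
    (c δ : ℝ) (hc : 1 / 2 < c) (hδ : 0 < δ)
    (D : Matrix (Fin m) (Fin k) ℤ)
    (hent : ∀ i j, D i j = 0 ∨ D i j = 1 ∨ D i j = -1)
    (hcol : ∀ j, ∃! i, D i j ≠ 0)
    (hrow : ∀ i : Fin m, (Finset.univ.filter fun j => D i j ≠ 0).card = ki i)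
    (n : ℕ) (hn : 1 ≤ n) :
    unitBallVol n ^ (-(2 * (k : ℝ) * c)) *
      ∫ x : Fin m → EuclideanSpace ℝ (Fin n),
        ∏ j : Fin k, truncPower n c δ (∑ i : Fin m, (D i j : ℝ) • x i)
    = δ ^ ((m : ℝ) - 2 * (k : ℝ) * c) * ∏ i : Fin m, 1 / (2 * (ki i : ℝ) * c - 1) :=
  product_form_admissible_integral_general k m ki hpos hsum c δ hc hδ D hent hcol hrow n hn
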